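/- In the anchored burning process on a finite wired graph G_Λ with anchor D, for each 1 ≤ i ≤ K+1 the set of vertices not yet burnt at the end of Phase i equals the set of descendants of D_{K−i+1} in the spanning tree φ_{D,Λ}(η): U^{(i+1)}_0 = desc_{φ_{D,Λ}(η)}(D_{K−i+1}). -/

import Mathlib

open Finset
open scoped Classical

namespace Anchored

variable {V : Type*} [DecidableEq V]

/-- iterating a partial parent map; `none` represents the sink. -/
def iterP (p : V → Option V) : ℕ → V → Option V
  | 0, v => some v
  | n + 1, v => (p v).bind (iterP p n)

/-- walks in the multigraph `a` avoiding the set `A` -/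
def ReachAvoid (a : V → V → ℕ) (A : Finset V) (u v : V) : Prop :=
  ∃ (nn : ℕ) (f : ℕ → V), f 0 = u ∧ f nn = v ∧ (∀ j ≤ nn, f j ∉ A) ∧
    ∀ j < nn, 0 < a (f j) (f (j + 1))

/-- oriented edges (with multiplicity index) from `v` into the finite set `T` -/
def edgesTo (a : V → V → ℕ) (v : V) (T : Finset V) : Finset (V × ℕ) :=
  T.biUnion fun w => (Finset.range (a v w)).image fun i => (w, i)

variable (a : V → V → ℕ) (S : Finset V) (out : V → Finset V)

/-- number of edges from `v` to the sink of the wired graph on `S`;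
`out v` is the set of heads of sink edges at `v` (actual vertices of `G`). -/
def sk (v : V) : ℕ := ∑ w ∈ out v, a v w

/-- degree of `v` in the wired graph on `S` -/
def degS (v : V) : ℕ := sk a out v + ∑ w ∈ S, a v w

variable (η : V → ℕ) (D : ℕ → Finset V) (kk : ℕ)

/-- number of global steps allotted to each phase of the anchored burning -/
def plen : ℕ := S.card + 1

/-- Flattened anchored burning process: `U m` is the set of unburnt vertices
after `m` global steps; phase `i` (for `i = 1, …, kk + 1`) occupies the steps
`m ∈ [(i-1)·plen, i·plen)` and forbids burning the vertices of `D (kk - i + 1)`.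
A vertex burns when its height is at least its number of edges to unburnt
vertices (the sink being burnt at time `0`). -/
def U : ℕ → Finset V
  | 0 => S
  | m + 1 => (U m).filter fun v =>
      v ∈ D (kk - m / plen S) ∨ η v < ∑ w ∈ U m, a v w

/-- the (anchored) burning time of `v` -/
noncomputable def τ (v : V) : ℕ := sInf {m | v ∉ U a S η D kk m}

/-- number of oriented edges from `v` whose head was burnt strictly before `v`
(including the sink edges) -/
noncomputable def mv (v : V) : ℕ :=
  sk a out v + ∑ w ∈ S \ U a S η D kk (τ a S η D kk v - 1), a v w

/-- the set of candidate tree edges at `v`: the oriented edges from `v` to the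
layer burnt at the previous step (at the first step of a phase: to everything
burnt in earlier phases, including the sink) -/
noncomputable def Fv (v : V) : Finset (V × ℕ) :=
  if (τ a S η D kk v - 1) % plen S = 0 then
    edgesTo a v (out v) ∪ edgesTo a v (S \ U a S η D kk (τ a S η D kk v - 1))
  else
    edgesTo a v
      (U a S η D kk (τ a S η D kk v - 2) \ U a S η D kk (τ a S η D kk v - 1))

/-- `Spec … prec e` says that `e` encodes the spanning tree assigned to `η` by
the anchored burning bijection: each `v ∈ S` gets the edge of `F_v` having
exactly `ℓ` predecessors in the ordering `prec v`, where
`η v = deg v - m_v + ℓ`. -/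
def Spec (prec : V → (V × ℕ) → (V × ℕ) → Prop) (e : V → Option (V × ℕ)) : Prop :=
  (∀ v ∉ S, e v = none) ∧
  ∀ v ∈ S, ∃ ed : V × ℕ, e v = some ed ∧ ed ∈ Fv a S out η D kk v ∧
    η v + mv a S out η D kk v =
      degS a S out v + ((Fv a S out η D kk v).filter fun f => prec v f ed).card

/-- the parent map (toward the sink) of an encoded spanning tree -/
def par (e : V → Option (V × ℕ)) (v : V) : Option V :=
  (e v).bind fun p => if p.1 ∈ S then some p.1 else none

/-- spanning trees of the wired graph on `S`, oriented toward the sink: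
every vertex of `S` carries exactly one valid oriented edge, and following
these edges one reaches the sink. -/
def IsSpanningTree (e : V → Option (V × ℕ)) : Prop :=
  (∀ v ∉ S, e v = none) ∧
  (∀ v ∈ S, ∃ w i, e v = some (w, i) ∧ i < a v w ∧ (w ∈ S ∨ w ∈ out v)) ∧
  (∀ v ∈ S, ∃ m, iterP (par S e) m v = none)

/-- stable configurations on the wired graph on `S` -/
def Stable : Prop := ∀ v ∈ S, η v < degS a S out v

/-- ample for every nonempty subset of `S` -/
def Ample : Prop := ∀ F ⊆ S, F.Nonempty → ∃ x ∈ F, ∑ y ∈ F, a x y ≤ η x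

/-- recurrent configurations on the wired graph on `S` -/
def Recurrent : Prop := Stable a S out η ∧ Ample a S η

end Anchored

/-!
Within one phase the burning rule is a fixed deflationary map on subsets of `Λ`, so it
stabilises after at most `|Λ|` steps; since a phase lasts `|Λ| + 1` steps, the unburnt set at
the end of a phase is a fixed point of that phase's rule. Hence a vertex burning at the first
step of phase `j + 1` only lost its protection, i.e. lies in `D_{K-j+1}`. Every tree edge points
to a vertex burnt strictly earlier, and, away from the first step of a phase, to one burnt
exactly one step earlier. So following the tree from a vertex unburnt after phase `i`, burning
times drop by one per edge without crossing a phase boundary until `D_{K-i+1}` is reached;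
conversely a descendant of `D_{K-i+1}` burns after its protected ancestor, which survives
phase `i`.
-/

theorem Finset.isFixedPt_iterate_of_card_le {α : Type*} {f : Finset α → Finset α}
    (hf : ∀ s, f s ⊆ s) {s : Finset α} {n : ℕ} (hn : #s ≤ n) :
    Function.IsFixedPt f (f^[n] s) := by
  by_contra hne
  have hstrict : ∀ k ≤ n, #(f^[k + 1] s) < #(f^[k] s) := by
    intro k hk
    rw [Function.iterate_succ_apply']
    refine card_lt_card ((hf _).ssubset_of_ne fun hfix => hne ?_)
    rw [← Nat.sub_add_cancel hk, Function.iterate_add_apply, Function.iterate_fixed hfix]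
    exact hfix
  have hcard : ∀ k ≤ n + 1, #(f^[k] s) + k ≤ #s := by
    intro k hk
    induction k with
    | zero => simp
    | succ k ih => have := hstrict k (by omega); have := ih (by omega); omega
  have := hcard (n + 1) le_rfl
  omega

namespace Anchored

variable {V : Type*}

lemma plen_pos (S : Finset V) : 0 < plen S := Nat.succ_pos _

variable [DecidableEq V]

def burnStep (a : V → V → ℕ) (η : V → ℕ) (P s : Finset V) : Finset V :=
  s.filter fun v => v ∈ P ∨ η v < ∑ w ∈ s, a v w

lemma burnStep_subset (a : V → V → ℕ) (η : V → ℕ) (P s : Finset V) :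
    burnStep a η P s ⊆ s :=
  filter_subset _ _

variable {a : V → V → ℕ} {S : Finset V} {out : V → Finset V} {η : V → ℕ} {D : ℕ → Finset V}
  {kk : ℕ}

lemma U_succ (m : ℕ) :
    U a S η D kk (m + 1) = burnStep a η (D (kk - m / plen S)) (U a S η D kk m) := rfl

lemma U_subset (m : ℕ) : U a S η D kk m ⊆ S := by
  induction m with
  | zero => exact Subset.refl S
  | succ m ih => exact (burnStep_subset _ _ _ _).trans ih

lemma U_antitone : Antitone (U a S η D kk) :=
  antitone_nat_of_succ_le fun _ => burnStep_subset _ _ _ _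

lemma U_add_eq_iterate {P : Finset V} {m : ℕ} :
    ∀ {n : ℕ}, (∀ k < n, D (kk - (m + k) / plen S) = P) →
      U a S η D kk (m + n) = (burnStep a η P)^[n] (U a S η D kk m)
  | 0, _ => rfl
  | n + 1, hP => by
    rw [Function.iterate_succ_apply', ← U_add_eq_iterate fun k hk => hP k (by omega),
      ← add_assoc, U_succ, hP n (by omega)]

lemma isFixedPt_U_of_card_le {P : Finset V} {m n : ℕ}
    (hP : ∀ k < n, D (kk - (m + k) / plen S) = P) (hn : #S ≤ n) :
    Function.IsFixedPt (burnStep a η P) (U a S η D kk (m + n)) := by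
  rw [U_add_eq_iterate hP]
  exact isFixedPt_iterate_of_card_le (burnStep_subset a η P)
    ((card_le_card (U_subset m)).trans hn)

lemma isFixedPt_U_phase_end {i : ℕ} (hi : 1 ≤ i) :
    Function.IsFixedPt (burnStep a η (D (kk + 1 - i))) (U a S η D kk (i * plen S)) := by
  obtain ⟨j, rfl⟩ := Nat.exists_eq_add_of_le' hi
  rw [add_one_mul]
  refine isFixedPt_U_of_card_le (fun k hk => ?_) (Nat.le_succ _)
  rw [mul_comm, Nat.mul_add_div (plen_pos S), Nat.div_eq_of_lt hk, add_zero]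
  congr 1
  omega

lemma mem_D_of_burnt_at_phase_start {i : ℕ} (hi : 1 ≤ i) {v : V}
    (hv : v ∈ U a S η D kk (i * plen S)) (hburnt : v ∉ U a S η D kk (i * plen S + 1)) :
    v ∈ D (kk + 1 - i) := by
  rw [← isFixedPt_U_phase_end hi, burnStep, mem_filter] at hv
  rw [U_succ, burnStep, mem_filter, Nat.mul_div_cancel _ (plen_pos S)] at hburnt
  tauto

lemma eq_empty_of_isFixedPt_burnStep (hA : Ample a S η) {s : Finset V} (hs : s ⊆ S)
    (hfix : Function.IsFixedPt (burnStep a η ∅) s) : s = ∅ := by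
  by_contra hne
  obtain ⟨x, hx, hηx⟩ := hA s hs (nonempty_iff_ne_empty.2 hne)
  rw [← hfix, burnStep, mem_filter] at hx
  simp only [notMem_empty, false_or] at hx
  omega

lemma U_eq_empty (hA : Ample a S η) (hD0 : D 0 = ∅) :
    U a S η D kk ((kk + 1) * plen S + #S) = ∅ := by
  refine eq_empty_of_isFixedPt_burnStep hA (U_subset _)
    (isFixedPt_U_of_card_le (fun k _ => ?_) le_rfl)
  have hafter : kk ≤ kk + 1 + k / plen S := (Nat.le_succ kk).trans (Nat.le_add_right _ _)
  rw [mul_comm, Nat.mul_add_div (plen_pos S), Nat.sub_eq_zero_of_le hafter, hD0]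

lemma mem_U_iff_lt_τ (hA : Ample a S η) (hD0 : D 0 = ∅) {v : V} {m : ℕ} :
    v ∈ U a S η D kk m ↔ m < τ a S η D kk v := by
  have hburnt : {n | v ∉ U a S η D kk n}.Nonempty :=
    ⟨(kk + 1) * plen S + #S, by simp [U_eq_empty hA hD0]⟩
  constructor
  · intro hv
    by_contra! hle
    exact Nat.sInf_mem hburnt (U_antitone hle hv)
  · intro hlt
    by_contra hv
    exact (Nat.sInf_le hv).not_gt hlt

lemma fst_mem_of_mem_edgesTo {v : V} {T : Finset V} {ed : V × ℕ}
    (h : ed ∈ edgesTo a v T) : ed.1 ∈ T := by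
  simp only [edgesTo, mem_biUnion, mem_image] at h
  obtain ⟨w, hw, i, -, rfl⟩ := h
  exact hw

lemma par_eq_some {e : V → Option (V × ℕ)} {v u : V} :
    par S e v = some u ↔ u ∈ S ∧ ∃ n, e v = some (u, n) := by
  simp only [par, Option.bind_eq_some_iff, Option.ite_none_right_eq_some, Option.some_inj]
  constructor
  · rintro ⟨⟨w, n⟩, hed, hw, rfl⟩
    exact ⟨hw, n, hed⟩
  · rintro ⟨hu, n, hed⟩
    exact ⟨(u, n), hed, hu, rfl⟩

lemma fst_notMem_U_of_mem_Fv (hout : ∀ v, Disjoint (out v) S) {v : V} {ed : V × ℕ}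
    (hed : ed ∈ Fv a S out η D kk v) (hS : ed.1 ∈ S) :
    ed.1 ∉ U a S η D kk (τ a S η D kk v - 1) := by
  rw [Fv] at hed
  split_ifs at hed
  · rcases mem_union.1 hed with hsink | hburnt
    · exact absurd hS (disjoint_left.1 (hout v) (fst_mem_of_mem_edgesTo hsink))
    · exact (mem_sdiff.1 (fst_mem_of_mem_edgesTo hburnt)).2
  · exact (mem_sdiff.1 (fst_mem_of_mem_edgesTo hed)).2

variable {prec : V → (V × ℕ) → (V × ℕ) → Prop} {e : V → Option (V × ℕ)}

lemma τ_lt_of_par_eq_some (hA : Ample a S η) (hD0 : D 0 = ∅) (hout : ∀ v, Disjoint (out v) S)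
    (he : Spec a S out η D kk prec e) {v u : V} (h : par S e v = some u) :
    τ a S η D kk u < τ a S η D kk v := by
  obtain ⟨hu, n, hvu⟩ := par_eq_some.1 h
  have hv : v ∈ S := by
    by_contra hv
    simp [he.1 v hv] at hvu
  obtain ⟨ed, hed, hF, -⟩ := he.2 v hv
  obtain rfl : ed = (u, n) := Option.some_inj.1 (hed.symm.trans hvu)
  have hu_burnt : ¬ τ a S η D kk v - 1 < τ a S η D kk u :=
    (mem_U_iff_lt_τ hA hD0).not.1 (fst_notMem_U_of_mem_Fv hout hF hu)
  have hv_pos : 0 < τ a S η D kk v := (mem_U_iff_lt_τ (kk := kk) hA hD0).1 hv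
  omega

lemma exists_par_eq_some_τ_succ (hA : Ample a S η) (hD0 : D 0 = ∅)
    (he : Spec a S out η D kk prec e) {v : V} (hv : v ∈ S)
    (hmod : (τ a S η D kk v - 1) % plen S ≠ 0) :
    ∃ u, par S e v = some u ∧ τ a S η D kk u + 1 = τ a S η D kk v := by
  obtain ⟨ed, hed, hF, -⟩ := he.2 v hv
  rw [Fv, if_neg hmod] at hF
  obtain ⟨hprev, hlast⟩ := mem_sdiff.1 (fst_mem_of_mem_edgesTo hF)
  have hpos : τ a S η D kk v - 1 ≠ 0 := fun h => hmod (by rw [h, Nat.zero_mod])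
  refine ⟨ed.1, par_eq_some.2 ⟨U_subset _ hprev, ed.2, hed⟩, ?_⟩
  rw [mem_U_iff_lt_τ hA hD0] at hprev hlast
  omega

lemma lt_τ_of_mem_D (hA : Ample a S η) (hD0 : D 0 = ∅) (hmono : Monotone D) {i : ℕ} {u : V}
    (hu : u ∈ S) (huD : u ∈ D (kk + 1 - i)) :
    i * plen S < τ a S η D kk u := by
  rw [← mem_U_iff_lt_τ hA hD0]
  suffices ∀ m ≤ i * plen S, u ∈ U a S η D kk m from this _ le_rfl
  intro m hm
  induction m with
  | zero => exact hu
  | succ m ih =>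
    rw [U_succ, burnStep, mem_filter]
    have : m / plen S < i := (Nat.div_lt_iff_lt_mul (plen_pos S)).2 (by omega)
    exact ⟨ih (by omega), Or.inl (hmono (by omega) huD)⟩

lemma lt_τ_of_iterP_par_mem_D (hA : Ample a S η) (hD0 : D 0 = ∅) (hmono : Monotone D)
    (hout : ∀ v, Disjoint (out v) S) (he : Spec a S out η D kk prec e) {i : ℕ} (hi : 1 ≤ i)
    {u : V} (huD : u ∈ D (kk + 1 - i)) :
    ∀ {m : ℕ} {w : V}, w ∈ S → iterP (par S e) m w = some u → i * plen S < τ a S η D kk w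
  | 0, w, hw, h => by
    obtain rfl : w = u := Option.some_inj.1 h
    exact lt_τ_of_mem_D hA hD0 hmono hw huD
  | m + 1, w, _, h => by
    obtain ⟨w', hw', h'⟩ := Option.bind_eq_some_iff.1 h
    have := lt_τ_of_iterP_par_mem_D hA hD0 hmono hout he hi huD (par_eq_some.1 hw').1 h'
    have := τ_lt_of_par_eq_some hA hD0 hout he hw'
    omega

lemma exists_iterP_par_mem_D (hA : Ample a S η) (hD0 : D 0 = ∅) (hmono : Monotone D)
    (he : Spec a S out η D kk prec e) {i : ℕ} (hi : 1 ≤ i) {w : V}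
    (hw : i * plen S < τ a S η D kk w) :
    ∃ m u, iterP (par S e) m w = some u ∧ u ∈ D (kk + 1 - i) := by
  induction hτ : τ a S η D kk w using Nat.strong_induction_on generalizing w with
  | _ t ih =>
  by_cases hwD : w ∈ D (kk + 1 - i)
  · exact ⟨0, w, rfl, hwD⟩
  have hwS : w ∈ S := U_subset _ ((mem_U_iff_lt_τ hA hD0).2 hw)
  by_cases hmod : (t - 1) % plen S = 0
  · exfalso
    obtain ⟨j, hj⟩ := Nat.dvd_of_mod_eq_zero hmod
    rw [mul_comm] at hj
    have hij : i ≤ j := Nat.le_of_mul_le_mul_right (by omega) (plen_pos S)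
    -- `w` burns at the first step of phase `j + 1`, so it was protected in phase `j`
    have hin : w ∈ U a S η D kk (j * plen S) := (mem_U_iff_lt_τ hA hD0).2 (by omega)
    have hnot : w ∉ U a S η D kk (j * plen S + 1) := (mem_U_iff_lt_τ hA hD0).not.2 (by omega)
    exact hwD (hmono (by omega) (mem_D_of_burnt_at_phase_start (hi.trans hij) hin hnot))
  · obtain ⟨u, hpar, hτu⟩ := exists_par_eq_some_τ_succ hA hD0 he hwS (hτ ▸ hmod)
    have hne : t - 1 ≠ i * plen S := fun h => hmod (by rw [h, Nat.mul_mod_left])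
    have hlt : τ a S η D kk u < t := by omega
    obtain ⟨m, u', hit, hu'⟩ := ih _ hlt (by omega) rfl
    exact ⟨m + 1, u', by rw [iterP, hpar, Option.bind_some, hit], hu'⟩

end Anchored

theorem stmt6_general {V : Type*} [DecidableEq V]
    (a : V → V → ℕ) (nbrs : V → Finset V)
    (S : Finset V)
    (D : ℕ → Finset V) (hmono : Monotone D) (hD0 : D 0 = ∅)
    (kk : ℕ)
    (prec : V → (V × ℕ) → (V × ℕ) → Prop)
    (out : V → Finset V) (hout : ∀ v, out v = nbrs v \ S)
    (η : V → ℕ) (hη : Anchored.Recurrent a S out η)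
    (e : V → Option (V × ℕ)) (he : Anchored.Spec a S out η D kk prec e) :
    ∀ i, 1 ≤ i → i ≤ kk + 1 →
      Anchored.U a S η D kk (i * Anchored.plen S) =
        S.filter fun w => ∃ (m : ℕ) (u : V),
          Anchored.iterP (Anchored.par S e) m w = some u ∧ u ∈ D (kk + 1 - i) := by
  intro i hi _
  have hdisj : ∀ v, Disjoint (out v) S := fun v => hout v ▸ sdiff_disjoint
  ext w
  rw [mem_filter, Anchored.mem_U_iff_lt_τ hη.2 hD0]
  constructor
  · intro hw
    exact ⟨Anchored.U_subset _ ((Anchored.mem_U_iff_lt_τ hη.2 hD0).2 hw),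
      Anchored.exists_iterP_par_mem_D hη.2 hD0 hmono he hi hw⟩
  · rintro ⟨hwS, m, u, hit, hu⟩
    exact Anchored.lt_τ_of_iterP_par_mem_D hη.2 hD0 hmono hdisj he hi hu hwS hit

/-- In the anchored burning process on the finite wired graph
`G_Λ` (`S = Λ`), for each `1 ≤ i ≤ K + 1` the set of vertices unburnt at the
end of Phase `i` (global step `i · plen`) equals the set of descendants of
`D (K - i + 1)` in the spanning tree `φ_{D,Λ}(η)`: the vertices `w` whose
path to the sink in the tree passes through `D (K - i + 1)`. -/
theorem stmt6 {V : Type*} [DecidableEq V] [Infinite V]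
    (a : V → V → ℕ) (nbrs : V → Finset V)
    (hsymm : ∀ u v, a u v = a v u) (hloop : ∀ v, a v v = 0)
    (hnbrs : ∀ v w, w ∈ nbrs v ↔ 0 < a v w)
    (hconn : ∀ u v : V, Anchored.ReachAvoid a ∅ u v)
    (S : Finset V) (hS : S.Nonempty)
    (D : ℕ → Finset V) (hmono : Monotone D) (hD0 : D 0 = ∅)
    (hcover : ∀ v, ∃ j, v ∈ D j)
    (hsc : ∀ j, 1 ≤ j → ∀ v ∉ D j, {w | Anchored.ReachAvoid a (D j) v w}.Infinite)
    (kk : ℕ) (hK : D kk ⊆ S) (hKmax : ∀ j, D j ⊆ S → j ≤ kk)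
    (prec : V → (V × ℕ) → (V × ℕ) → Prop)
    (hprec : ∀ v, IsStrictTotalOrder (V × ℕ) (prec v))
    (out : V → Finset V) (hout : ∀ v, out v = nbrs v \ S)
    (η : V → ℕ) (hη : Anchored.Recurrent a S out η)
    (e : V → Option (V × ℕ)) (he : Anchored.Spec a S out η D kk prec e) :
    ∀ i, 1 ≤ i → i ≤ kk + 1 →
      Anchored.U a S η D kk (i * Anchored.plen S) =
        S.filter fun w => ∃ (m : ℕ) (u : V),
          Anchored.iterP (Anchored.par S e) m w = some u ∧ u ∈ D (kk + 1 - i) :=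
  stmt6_general a nbrs S D hmono hD0 kk prec out hout η hη e he
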